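/- arXiv:2202.05642 — 2 statements merged into one kernel-verified Lean document; each statement's English description precedes it below -/
import Mathlib

section
/- Let b = (b_ij) be a real 2×2 matrix with b12 < 0 and b21 < 0 (so that Δ := (b22 − b11)² + 4·b12·b21 > 0 and √Δ + b11 − b22 > 0), set λ1 = (−b11 − b22 + √Δ)/2, λ2 = λ1 − √Δ and ε := √Δ + b22 − b11 + 2·b21, and suppose ε > 0. Then θ₂₁ := −b12·(2√Δ − ε)/(√Δ·(√Δ + b11 − b22)) > 0, θ₂₂ := (2√Δ − ε)/(2√Δ) lies in (0,1), and for all t ≥ 0 the row sums of exp(−t·b) satisfy π'₁(0,t) ≤ θ₂₁·e^{λ1 t} + e^{λ2 t} and π'₂(0,t) = θ₂₂·e^{λ1 t} + (1 − θ₂₂)·e^{λ2 t}. -/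
/-!
Let `λ₁ > λ₂` be the eigenvalues of `-b`. By Cayley–Hamilton `(-b - λ₁)(-b - λ₂) = 0`, so
`P = (-b - λ₂)/(λ₁ - λ₂)` and `1 - P` are complementary idempotents with
`-b = λ₁ P + λ₂ (1 - P)`; summing the exponential series termwise gives Sylvester's formula
`exp(-t b) = e^{λ₁ t} P + e^{λ₂ t} (1 - P)`. Each row sum of `exp(-t b)` is therefore an affine
combination of `e^{λ₁ t}` and `e^{λ₂ t}`. For the second row the weights are `θ₂₂` and `1 - θ₂₂`.
For the first row the weight of `e^{λ₁ t}` is `θ₂₁`, because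
`(√Δ + b11 - b22)(√Δ - b11 + b22) = 4 b12 b21`, and the weight of `e^{λ₂ t}` is at most `1`
because `b12 < 0`.
-/

open Matrix Real

/-- `rowSum0 b t i` is the `i`-th row sum of the matrix exponential `exp(−t·b)`. -/
noncomputable def rowSum0 (b : Matrix (Fin 2) (Fin 2) ℝ) (t : ℝ) (i : Fin 2) : ℝ :=
  (NormedSpace.exp ((-t) • b) *ᵥ ![1, 1]) i

open NormedSpace

theorem smul_add_smul_pow_of_add_eq_one {R 𝔸 : Type*} [CommRing R] [Ring 𝔸] [Algebra R 𝔸]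
    {P Q : 𝔸} (hPQ : P + Q = 1) (hPQ₀ : P * Q = 0) (a c : R) (n : ℕ) :
    (a • P + c • Q) ^ n = a ^ n • P + c ^ n • Q := by
  obtain rfl : Q = 1 - P := eq_sub_of_add_eq' hPQ
  have hP : P * P = P := by rw [mul_sub, mul_one, sub_eq_zero] at hPQ₀; exact hPQ₀.symm
  induction n with
  | zero => simp
  | succ n ih =>
    rw [pow_succ, ih]
    simp only [pow_succ, mul_smul, smul_mul_smul_comm, add_mul, mul_add, mul_sub, sub_mul,
      mul_one, one_mul, hP, sub_self]
    module

section Sylvester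

variable {𝔸 : Type*} [Ring 𝔸] [Algebra ℝ 𝔸] [TopologicalSpace 𝔸] [IsTopologicalRing 𝔸]
  [ContinuousSMul ℝ 𝔸] [T2Space 𝔸]

theorem exp_smul_add_smul_of_add_eq_one {P Q : 𝔸} (hPQ : P + Q = 1) (hPQ₀ : P * Q = 0)
    (a c : ℝ) : exp (a • P + c • Q) = Real.exp a • P + Real.exp c • Q := by
  have hexp (r : ℝ) : HasSum (fun n ↦ (n.factorial : ℝ)⁻¹ * r ^ n) (Real.exp r) := by
    simpa [Real.exp_eq_exp_ℝ] using exp_series_hasSum_exp' (𝕂 := ℝ) r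
  rw [exp_eq_tsum ℝ]
  refine (((hexp a).smul_const P).add ((hexp c).smul_const Q)).tsum_eq ▸ tsum_congr fun n ↦ ?_
  rw [smul_add_smul_pow_of_add_eq_one hPQ hPQ₀, smul_add, mul_smul, mul_smul]

theorem exp_smul_eq_of_sub_mul_sub_eq_zero {x : 𝔸} {μ₁ μ₂ : ℝ} (hμ : μ₁ ≠ μ₂)
    (hx : (x - algebraMap ℝ 𝔸 μ₁) * (x - algebraMap ℝ 𝔸 μ₂) = 0) (t : ℝ) :
    exp (t • x) = (μ₁ - μ₂)⁻¹ • (Real.exp (μ₁ * t) • (x - algebraMap ℝ 𝔸 μ₂)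
      - Real.exp (μ₂ * t) • (x - algebraMap ℝ 𝔸 μ₁)) := by
  have hμ' : μ₁ - μ₂ ≠ 0 := sub_ne_zero.2 hμ
  set P := (μ₁ - μ₂)⁻¹ • (x - algebraMap ℝ 𝔸 μ₂)
  set Q := (μ₁ - μ₂)⁻¹ • (algebraMap ℝ 𝔸 μ₁ - x)
  have hQP : Q + P = 1 := by
    rw [← smul_add, sub_add_sub_cancel, ← map_sub, Algebra.smul_def, ← map_mul,
      inv_mul_cancel₀ hμ', map_one]
  have hQP₀ : Q * P = 0 := by
    rw [smul_mul_smul_comm, ← neg_sub x, neg_mul, hx, neg_zero, smul_zero]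
  have htx : t • x = (μ₂ * t) • Q + (μ₁ * t) • P := by
    simp only [P, Q, Algebra.algebraMap_eq_smul_one]
    match_scalars <;> field_simp <;> ring
  rw [htx, exp_smul_add_smul_of_add_eq_one hQP hQP₀, add_comm]
  module

end Sylvester

theorem Matrix.sub_algebraMap_mul_sub_algebraMap_eq_zero_of_card_eq_two {R n : Type*}
    [CommRing R] [Nontrivial R] [Fintype n] [DecidableEq n] (hn : Fintype.card n = 2)
    (A : Matrix n n R) {μ₁ μ₂ : R} (hsum : μ₁ + μ₂ = A.trace) (hprod : μ₁ * μ₂ = A.det) :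
    (A - algebraMap R _ μ₁) * (A - algebraMap R _ μ₂) = 0 := by
  have hA : A.charpoly = (Polynomial.X - Polynomial.C μ₁) * (Polynomial.X - Polynomial.C μ₂) := by
    rw [A.charpoly_of_card_eq_two hn, ← hsum, ← hprod, map_add, map_mul]
    ring
  simpa [hA] using A.aeval_self_charpoly

theorem rowSum0_eq {b : Matrix (Fin 2) (Fin 2) ℝ} {μ₁ μ₂ : ℝ} (hμ : μ₁ ≠ μ₂)
    (hsum : μ₁ + μ₂ = -b.trace) (hprod : μ₁ * μ₂ = b.det) (t : ℝ) (i : Fin 2) :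
    rowSum0 b t i = (Real.exp (μ₁ * t) * (-(b i 0 + b i 1) - μ₂)
      - Real.exp (μ₂ * t) * (-(b i 0 + b i 1) - μ₁)) / (μ₁ - μ₂) := by
  have hb := (-b).sub_algebraMap_mul_sub_algebraMap_eq_zero_of_card_eq_two
    (Fintype.card_fin 2) (by rwa [trace_neg])
    (by rwa [det_neg, Fintype.card_fin, neg_one_sq, one_mul])
  rw [rowSum0, neg_smul, ← smul_neg, exp_smul_eq_of_sub_mul_sub_eq_zero hμ hb]
  fin_cases i <;> simp [Matrix.mulVec, dotProduct, Fin.sum_univ_two,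
    Matrix.algebraMap_matrix_apply] <;> ring

theorem rowSum0_eq_of_sqrt_discr {b : Matrix (Fin 2) (Fin 2) ℝ} {s lam1 lam2 : ℝ} (hs : 0 < s)
    (hsq : s ^ 2 = (b 1 1 - b 0 0) ^ 2 + 4 * b 0 1 * b 1 0)
    (hlam1 : lam1 = (-(b 0 0) - b 1 1 + s) / 2) (hlam2 : lam2 = lam1 - s) (t : ℝ) (i : Fin 2) :
    rowSum0 b t i = ((s + b 0 0 + b 1 1 - 2 * (b i 0 + b i 1)) * Real.exp (lam1 * t)
      + (s - b 0 0 - b 1 1 + 2 * (b i 0 + b i 1)) * Real.exp (lam2 * t)) / (2 * s) := by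
  rw [rowSum0_eq (μ₁ := lam1) (μ₂ := lam2) (by linarith) (by rw [trace_fin_two]; linarith)
    (by rw [det_fin_two, hlam2, hlam1]; linear_combination -hsq / 4), hlam2, hlam1]
  field_simp
  ring

theorem stmt5_general (b : Matrix (Fin 2) (Fin 2) ℝ)
    (hb12 : b 0 1 < 0) (hb21 : b 1 0 < 0)
    (Δ : ℝ) (hΔdef : Δ = (b 1 1 - b 0 0) ^ 2 + 4 * b 0 1 * b 1 0)
    (lam1 lam2 eps : ℝ)
    (hlam1 : lam1 = (-(b 0 0) - b 1 1 + Real.sqrt Δ) / 2)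
    (hlam2 : lam2 = lam1 - Real.sqrt Δ)
    (heps : eps = Real.sqrt Δ + b 1 1 - b 0 0 + 2 * b 1 0)
    (hepspos : 0 < eps)
    (θ₂₁ θ₂₂ : ℝ)
    (hθ₂₁ : θ₂₁ = -(b 0 1) * (2 * Real.sqrt Δ - eps)
        / (Real.sqrt Δ * (Real.sqrt Δ + b 0 0 - b 1 1)))
    (hθ₂₂ : θ₂₂ = (2 * Real.sqrt Δ - eps) / (2 * Real.sqrt Δ)) :
    0 < θ₂₁ ∧ θ₂₂ ∈ Set.Ioo (0 : ℝ) 1 ∧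
    ∀ t : ℝ, 0 ≤ t →
      rowSum0 b t 0 ≤ θ₂₁ * Real.exp (lam1 * t) + Real.exp (lam2 * t) ∧
      rowSum0 b t 1 = θ₂₂ * Real.exp (lam1 * t) + (1 - θ₂₂) * Real.exp (lam2 * t) := by
  set s := √Δ
  have hgap : |b 1 1 - b 0 0| < s := Real.lt_sqrt_of_sq_lt (by rw [sq_abs, hΔdef]; nlinarith)
  have hs : 0 < s := (abs_nonneg _).trans_lt hgap
  obtain ⟨hgap₁, hgap₂⟩ := abs_sub_lt_iff.1 hgap
  have hsq : s ^ 2 = (b 1 1 - b 0 0) ^ 2 + 4 * b 0 1 * b 1 0 := by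
    rw [Real.sq_sqrt (Real.sqrt_pos.1 hs).le, hΔdef]
  have hrow := rowSum0_eq_of_sqrt_discr hs hsq hlam1 hlam2
  have hθ₂₁' : θ₂₁ = (s + b 1 1 - b 0 0 - 2 * b 0 1) / (2 * s) := by
    rw [hθ₂₁, heps, div_eq_div_iff (by nlinarith) (by positivity)]
    linear_combination (-s) * hsq
  rw [heps] at hθ₂₂ hepspos
  refine ⟨hθ₂₁' ▸ div_pos (by linarith) (by positivity),
    ⟨hθ₂₂ ▸ div_pos (by linarith) (by positivity),
      by rw [hθ₂₂, div_lt_one (by positivity)]; linarith⟩,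
    fun t _ ↦ ⟨?_, by rw [hrow, hθ₂₂]; field_simp; ring⟩⟩
  have hweight : (s + b 0 0 - b 1 1 + 2 * b 0 1) / (2 * s) ≤ 1 := by
    rw [div_le_one (by positivity)]
    linarith
  calc rowSum0 b t 0
      = θ₂₁ * Real.exp (lam1 * t)
        + (s + b 0 0 - b 1 1 + 2 * b 0 1) / (2 * s) * Real.exp (lam2 * t) := by
        rw [hrow, hθ₂₁']; ring
    _ ≤ θ₂₁ * Real.exp (lam1 * t) + Real.exp (lam2 * t) :=
        add_le_add_right (mul_le_of_le_one_left (Real.exp_pos _).le hweight) _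

/-- If `b12 < 0`, `b21 < 0` (so `Δ = (b22 − b11)² + 4 b12 b21 > 0` and
`√Δ + b11 − b22 > 0`) and `ε = √Δ + b22 − b11 + 2 b21 < 0`, then with
`θ₂₁ = −b12(2√Δ − ε)/(√Δ(√Δ + b11 − b22)) ∈ (0,1)` and `θ₂₂ = (2√Δ − ε)/(2√Δ) > 0`
one has `π'₁(0,t) = θ₂₁ e^{λ1 t} + (1 − θ₂₁) e^{λ2 t}` and
`π'₂(0,t) ≤ θ₂₂ e^{λ1 t} + e^{λ2 t}` for all `t ≥ 0`. -/
theorem stmt5 (b : Matrix (Fin 2) (Fin 2) ℝ)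
    (hb12 : b 0 1 < 0) (hb21 : b 1 0 < 0)
    (Δ : ℝ) (hΔdef : Δ = (b 1 1 - b 0 0) ^ 2 + 4 * b 0 1 * b 1 0) (hΔ : 0 < Δ)
    (hden : 0 < Real.sqrt Δ + b 0 0 - b 1 1)
    (lam1 lam2 eps : ℝ)
    (hlam1 : lam1 = (-(b 0 0) - b 1 1 + Real.sqrt Δ) / 2)
    (hlam2 : lam2 = lam1 - Real.sqrt Δ)
    (heps : eps = Real.sqrt Δ + b 1 1 - b 0 0 + 2 * b 1 0)
    (hepspos : 0 < eps)
    (θ₂₁ θ₂₂ : ℝ)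
    (hθ₂₁ : θ₂₁ = -(b 0 1) * (2 * Real.sqrt Δ - eps)
        / (Real.sqrt Δ * (Real.sqrt Δ + b 0 0 - b 1 1)))
    (hθ₂₂ : θ₂₂ = (2 * Real.sqrt Δ - eps) / (2 * Real.sqrt Δ)) :
    0 < θ₂₁ ∧ θ₂₂ ∈ Set.Ioo (0 : ℝ) 1 ∧
    ∀ t : ℝ, 0 ≤ t →
      rowSum0 b t 0 ≤ θ₂₁ * Real.exp (lam1 * t) + Real.exp (lam2 * t) ∧
      rowSum0 b t 1 = θ₂₂ * Real.exp (lam1 * t) + (1 - θ₂₂) * Real.exp (lam2 * t) :=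
  stmt5_general b hb12 hb21 Δ hΔdef lam1 lam2 eps hlam1 hlam2 heps hepspos θ₂₁ θ₂₂ hθ₂₁ hθ₂₂
end

section
/- Let b = (b_ij) be a real 2×2 matrix, c1, c2 ≥ 0, and m1, m2 σ-finite measures on ℝ₊² supported by ℝ₊² \ {0} with ∫(z1 ∧ z1² + z2) m1(dz) + ∫(z2 ∧ z2² + z1) m2(dz) < ∞, satisfying b12 + ∫ z2 m1(dz) ≤ 0 and b21 + ∫ z1 m2(dz) ≤ 0. Define φ = (φ1, φ2) by φ1(λ) = b11 λ1 + b12 λ2 + c1 λ1² + ∫(e^{−⟨λ,z⟩} − 1 + ⟨λ,z⟩) m1(dz), φ2(λ) = b21 λ1 + b22 λ2 + c2 λ2² + ∫(e^{−⟨λ,z⟩} − 1 + ⟨λ,z⟩) m2(dz), and the local projections φ*₁(x) = (b11 + b12)x + c1 x² + ∫(e^{−x z1} − 1 + x z1) m1(dz), φ*₂(x) = (b21 + b22)x + c2 x² + ∫(e^{−x z2} − 1 + x z2) m2(dz) for x ≥ 0. Let φ⁰(x) = a0 x + c0 x² + ∫_0^∞ (e^{−x u} − 1 + x u) m0(du)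 (a0 ∈ ℝ, c0 ≥ 0, ∫(u ∧ u²) m0(du) < ∞) be a scalar branching mechanism with φ*₁(x) ≥ φ⁰(x) and φ*₂(x) ≥ φ⁰(x) for all x ≥ 0. Let r0 ≤ t, ξ : [r0, t] → ℝ measurable and bounded, λ = (λ1, λ2) ∈ ℝ₊², and suppose u : [r0, t] → ℝ₊² and w : [r0, t] → ℝ₊ are continuous and satisfy u^{(i)}(r) = λ_i − ∫_r^t e^{ξ(s)} φ_i(e^{−ξ(s)} u(s)) ds (i = 1, 2) and w(r) = max(λ1, λ2) − ∫_r^t e^{ξ(s)} φ⁰(e^{−ξ(s)} w(s)) ds for all r ∈ [r0, t]. Then u^{(i)}(r) ≤ w(r) for i = 1, 2 and all r ∈ [r0, t]. -/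
open MeasureTheory Real

/-- The closed first quadrant of `ℝ²`. -/
def quadrant : Set (ℝ × ℝ) := {p | 0 ≤ p.1 ∧ 0 ≤ p.2}

/-- First component of the two-type branching mechanism `φ`. -/
noncomputable def phi1 (b : Matrix (Fin 2) (Fin 2) ℝ) (c1 : ℝ) (m1 : Measure (ℝ × ℝ))
    (l : ℝ × ℝ) : ℝ :=
  b 0 0 * l.1 + b 0 1 * l.2 + c1 * l.1 ^ 2
    + ∫ z, (Real.exp (-(l.1 * z.1 + l.2 * z.2)) - 1 + (l.1 * z.1 + l.2 * z.2)) ∂m1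

/-- Second component of the two-type branching mechanism `φ`. -/
noncomputable def phi2 (b : Matrix (Fin 2) (Fin 2) ℝ) (c2 : ℝ) (m2 : Measure (ℝ × ℝ))
    (l : ℝ × ℝ) : ℝ :=
  b 1 0 * l.1 + b 1 1 * l.2 + c2 * l.2 ^ 2
    + ∫ z, (Real.exp (-(l.1 * z.1 + l.2 * z.2)) - 1 + (l.1 * z.1 + l.2 * z.2)) ∂m2

/-- First local projection `φ*₁` of `φ`. -/
noncomputable def phiStar1 (b : Matrix (Fin 2) (Fin 2) ℝ) (c1 : ℝ) (m1 : Measure (ℝ × ℝ))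
    (x : ℝ) : ℝ :=
  (b 0 0 + b 0 1) * x + c1 * x ^ 2 + ∫ z, (Real.exp (-(x * z.1)) - 1 + x * z.1) ∂m1

/-- Second local projection `φ*₂` of `φ`. -/
noncomputable def phiStar2 (b : Matrix (Fin 2) (Fin 2) ℝ) (c2 : ℝ) (m2 : Measure (ℝ × ℝ))
    (x : ℝ) : ℝ :=
  (b 1 0 + b 1 1) * x + c2 * x ^ 2 + ∫ z, (Real.exp (-(x * z.2)) - 1 + x * z.2) ∂m2

/-- The scalar branching mechanism `φ⁰`. -/
noncomputable def phi0 (a0 c0 : ℝ) (m0 : Measure ℝ) (x : ℝ) : ℝ :=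
  a0 * x + c0 * x ^ 2 + ∫ u, (Real.exp (-(x * u)) - 1 + x * u) ∂m0

/-!
Put `d₁ = u⁽¹⁾ - w`, `d₂ = u⁽²⁾ - w` and `g = max (max d₁ d₂) 0`. On the quadrant the jump part
of `φ₁` only grows with `λ₂`, so `φ₁ λ ≥ φ*₁ λ₁ + b₁₂ (λ₂ - λ₁)`, and `φ⁰ x - a₀ x` is
nondecreasing. Together with `φ*₁ ≥ φ⁰` and `b₁₂ ≤ 0` (admissibility) this bounds the difference
of the integrands of the equations for `w` and `u⁽¹⁾` by `(|a₀| - b₁₂) g` wherever `d₁ ≥ 0`.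
Since `d₁ t = λ₁ - max λ₁ λ₂ ≤ 0`, integrating from `r` up to the first point where `d₁ ≤ 0`
gives `d₁ r ≤ C ∫_r^t g`; the same holds for `d₂` after exchanging the two types. Hence
`g r ≤ C ∫_r^t g`, and Gronwall's iteration forces `g = 0`.
-/

open Set

lemma exp_neg_sub_one_add_nonneg (a : ℝ) : 0 ≤ exp (-a) - 1 + a := by
  linarith [add_one_le_exp (-a)]

lemma exp_neg_sub_one_add_le_min {a : ℝ} (ha : 0 ≤ a) : exp (-a) - 1 + a ≤ min a (a ^ 2) := by
  have hexp : exp (-a) ≤ 1 := exp_le_one_iff.2 (neg_nonpos.2 ha)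
  refine le_min (by linarith) ?_
  rcases le_total a 1 with h | h
  · have := (abs_le.1 (abs_exp_sub_one_sub_id_le (x := -a) (by rwa [abs_neg, abs_of_nonneg ha]))).2
    linarith [neg_sq a]
  · nlinarith

lemma exp_neg_sub_one_add_le_of_le {a b : ℝ} (ha : 0 ≤ a) (hab : a ≤ b) :
    exp (-a) - 1 + a ≤ exp (-b) - 1 + b := by
  have hsplit : exp (-b) = exp (-a) * exp (-(b - a)) := by rw [← exp_add]; ring_nf
  have h1 : exp (-a) * (1 - (b - a)) ≤ exp (-a) * exp (-(b - a)) :=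
    mul_le_mul_of_nonneg_left (by linarith [add_one_le_exp (-(b - a))]) (exp_pos _).le
  nlinarith [exp_le_one_iff.2 (neg_nonpos.2 ha)]

lemma exp_neg_add_sub_one_add_le (a : ℝ) {b : ℝ} (hb : 0 ≤ b) :
    exp (-(a + b)) - 1 + (a + b) ≤ exp (-a) - 1 + a + b := by
  linarith [exp_le_exp.2 (by linarith : -(a + b) ≤ -a)]

lemma min_mul_le_mul_min {x u : ℝ} (hx : 0 ≤ x) (hu : 0 ≤ u) :
    min (x * u) ((x * u) ^ 2) ≤ (x + x ^ 2) * min u (u ^ 2) := by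
  rcases le_total u 1 with h | h
  · rw [min_eq_right (by nlinarith : u ^ 2 ≤ u)]
    exact (min_le_right _ _).trans (by nlinarith)
  · rw [min_eq_left (by nlinarith : u ≤ u ^ 2)]
    exact (min_le_left _ _).trans (by nlinarith)

lemma exp_neg_mul_sub_one_add_le {x u : ℝ} (hx : 0 ≤ x) (hu : 0 ≤ u) :
    exp (-(x * u)) - 1 + x * u ≤ (x + x ^ 2) * min u (u ^ 2) :=
  (exp_neg_sub_one_add_le_min (mul_nonneg hx hu)).trans (min_mul_le_mul_min hx hu)

lemma exp_neg_inner_sub_one_add_le {l z : ℝ × ℝ} (hl : l ∈ quadrant) (hz : z ∈ quadrant) :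
    exp (-(l.1 * z.1 + l.2 * z.2)) - 1 + (l.1 * z.1 + l.2 * z.2)
      ≤ (l.1 + l.1 ^ 2 + l.2) * (min z.1 (z.1 ^ 2) + z.2) := by
  have h1 := exp_neg_add_sub_one_add_le (l.1 * z.1) (mul_nonneg hl.2 hz.2)
  have h2 := exp_neg_mul_sub_one_add_le hl.1 hz.1
  have h3 : 0 ≤ min z.1 (z.1 ^ 2) := le_min hz.1 (sq_nonneg _)
  nlinarith [mul_nonneg hl.2 h3, mul_nonneg (add_nonneg hl.1 (sq_nonneg l.1)) hz.2]

lemma integrable_of_lintegral_ofReal_lt_top {α : Type*} [MeasurableSpace α] {μ : Measure α}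
    {f : α → ℝ} (hf : Measurable f) (h0 : 0 ≤ᵐ[μ] f)
    (hfin : ∫⁻ a, ENNReal.ofReal (f a) ∂μ < ⊤) : Integrable f μ :=
  ⟨hf.aestronglyMeasurable, (hasFiniteIntegral_iff_ofReal h0).2 hfin⟩

lemma smul_mem_quadrant {a : ℝ} (ha : 0 ≤ a) {l : ℝ × ℝ} (hl : l ∈ quadrant) :
    a • l ∈ quadrant :=
  ⟨mul_nonneg ha hl.1, mul_nonneg ha hl.2⟩

lemma ae_mem_quadrant {m : Measure (ℝ × ℝ)} (hsupp : m quadrantᶜ = 0) :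
    ∀ᵐ z ∂m, z ∈ quadrant :=
  ae_iff.2 hsupp

lemma ae_nonneg_of_Iic_null {m : Measure ℝ} (hsupp : m (Iic 0) = 0) : ∀ᵐ u ∂m, 0 ≤ u :=
  measure_mono_null (fun u (hu : ¬ 0 ≤ u) => (not_le.1 hu).le) hsupp

lemma integrable_moment {m : Measure (ℝ × ℝ)} (hsupp : m quadrantᶜ = 0)
    (hmom : ∫⁻ z, ENNReal.ofReal (min z.1 (z.1 ^ 2) + z.2) ∂m < ⊤) :
    Integrable (fun z => min z.1 (z.1 ^ 2) + z.2) m :=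
  integrable_of_lintegral_ofReal_lt_top (by fun_prop)
    ((ae_mem_quadrant hsupp).mono fun z hz => add_nonneg (le_min hz.1 (sq_nonneg _)) hz.2) hmom

lemma phi1_measurable (b : Matrix (Fin 2) (Fin 2) ℝ) (c : ℝ) (m : Measure (ℝ × ℝ)) [SFinite m] :
    Measurable (phi1 b c m) :=
  (by fun_prop : Measurable fun l : ℝ × ℝ => b 0 0 * l.1 + b 0 1 * l.2 + c * l.1 ^ 2).add
    (StronglyMeasurable.integral_prod_right' (ν := m)
      (f := fun p : (ℝ × ℝ) × (ℝ × ℝ) =>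
        exp (-(p.1.1 * p.2.1 + p.1.2 * p.2.2)) - 1 + (p.1.1 * p.2.1 + p.1.2 * p.2.2))
      (by fun_prop)).measurable

lemma phi0_measurable (a0 c0 : ℝ) (m0 : Measure ℝ) [SFinite m0] : Measurable (phi0 a0 c0 m0) :=
  (by fun_prop : Measurable fun x : ℝ => a0 * x + c0 * x ^ 2).add
    (StronglyMeasurable.integral_prod_right' (ν := m0)
      (f := fun p : ℝ × ℝ => exp (-(p.1 * p.2)) - 1 + p.1 * p.2) (by fun_prop)).measurable

section LevyIntegrals

variable {m : Measure (ℝ × ℝ)} {m0 : Measure ℝ}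

lemma ae_norm_exp_neg_inner_sub_one_add_le (hsupp : m quadrantᶜ = 0) {l : ℝ × ℝ}
    (hl : l ∈ quadrant) :
    ∀ᵐ z ∂m, ‖exp (-(l.1 * z.1 + l.2 * z.2)) - 1 + (l.1 * z.1 + l.2 * z.2)‖
      ≤ (l.1 + l.1 ^ 2 + l.2) * (min z.1 (z.1 ^ 2) + z.2) := by
  filter_upwards [ae_mem_quadrant hsupp] with z hz
  rw [Real.norm_of_nonneg (exp_neg_sub_one_add_nonneg _)]
  exact exp_neg_inner_sub_one_add_le hl hz

lemma integrable_exp_neg_inner_sub_one_add (hsupp : m quadrantᶜ = 0)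
    (hmom : Integrable (fun z => min z.1 (z.1 ^ 2) + z.2) m) {l : ℝ × ℝ} (hl : l ∈ quadrant) :
    Integrable (fun z => exp (-(l.1 * z.1 + l.2 * z.2)) - 1 + (l.1 * z.1 + l.2 * z.2)) m :=
  (hmom.const_mul _).mono' (by fun_prop) (ae_norm_exp_neg_inner_sub_one_add_le hsupp hl)

lemma ae_norm_exp_neg_mul_sub_one_add_le (hsupp0 : m0 (Iic 0) = 0) {x : ℝ} (hx : 0 ≤ x) :
    ∀ᵐ u ∂m0, ‖exp (-(x * u)) - 1 + x * u‖ ≤ (x + x ^ 2) * min u (u ^ 2) := by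
  filter_upwards [ae_nonneg_of_Iic_null hsupp0] with u hu
  rw [Real.norm_of_nonneg (exp_neg_sub_one_add_nonneg _)]
  exact exp_neg_mul_sub_one_add_le hx hu

lemma integrable_exp_neg_mul_sub_one_add (hsupp0 : m0 (Iic 0) = 0)
    (hmom0 : Integrable (fun u => min u (u ^ 2)) m0) {x : ℝ} (hx : 0 ≤ x) :
    Integrable (fun u => exp (-(x * u)) - 1 + x * u) m0 :=
  (hmom0.const_mul _).mono' (by fun_prop) (ae_norm_exp_neg_mul_sub_one_add_le hsupp0 hx)

lemma exists_abs_phi1_le (b : Matrix (Fin 2) (Fin 2) ℝ) (c : ℝ) (hsupp : m quadrantᶜ = 0)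
    (hmom : Integrable (fun z => min z.1 (z.1 ^ 2) + z.2) m) (M : ℝ) :
    ∃ B, ∀ l ∈ quadrant, ‖l‖ ≤ M → |phi1 b c m l| ≤ B := by
  refine ⟨(|b 0 0| + |b 0 1|) * M + |c| * M ^ 2
    + (2 * M + M ^ 2) * ∫ z, (min z.1 (z.1 ^ 2) + z.2) ∂m, fun l hl hlM => ?_⟩
  have h1 : l.1 ≤ M := (le_abs_self _).trans ((norm_fst_le l).trans hlM)
  have h2 : l.2 ≤ M := (le_abs_self _).trans ((norm_snd_le l).trans hlM)
  have hI : 0 ≤ ∫ z, (min z.1 (z.1 ^ 2) + z.2) ∂m :=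
    integral_nonneg_of_ae <| (ae_mem_quadrant hsupp).mono fun z hz =>
      add_nonneg (le_min hz.1 (sq_nonneg _)) hz.2
  have hint : |∫ z, (exp (-(l.1 * z.1 + l.2 * z.2)) - 1 + (l.1 * z.1 + l.2 * z.2)) ∂m|
      ≤ (2 * M + M ^ 2) * ∫ z, (min z.1 (z.1 ^ 2) + z.2) ∂m := by
    refine (norm_integral_le_of_norm_le (hmom.const_mul _)
      (ae_norm_exp_neg_inner_sub_one_add_le hsupp hl)).trans ?_
    rw [integral_const_mul]
    exact mul_le_mul_of_nonneg_right (by nlinarith [hl.1, hl.2]) hI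
  have hsq : l.1 ^ 2 ≤ M ^ 2 := pow_le_pow_left₀ hl.1 h1 2
  unfold phi1
  calc _ ≤ |b 0 0 * l.1 + b 0 1 * l.2 + c * l.1 ^ 2|
        + |∫ z, (exp (-(l.1 * z.1 + l.2 * z.2)) - 1 + (l.1 * z.1 + l.2 * z.2)) ∂m| :=
        abs_add_le _ _
    _ ≤ |b 0 0| * l.1 + |b 0 1| * l.2 + |c| * l.1 ^ 2
        + |∫ z, (exp (-(l.1 * z.1 + l.2 * z.2)) - 1 + (l.1 * z.1 + l.2 * z.2)) ∂m| := by
        gcongr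
        refine (abs_add_three _ _ _).trans_eq ?_
        rw [abs_mul, abs_mul, abs_mul, abs_of_nonneg hl.1, abs_of_nonneg hl.2,
          abs_of_nonneg (sq_nonneg l.1)]
    _ ≤ _ := by
        nlinarith [mul_le_mul_of_nonneg_left h1 (abs_nonneg (b 0 0)),
          mul_le_mul_of_nonneg_left h2 (abs_nonneg (b 0 1)),
          mul_le_mul_of_nonneg_left hsq (abs_nonneg c)]

lemma exists_abs_phi0_le (a0 c0 : ℝ) (hsupp0 : m0 (Iic 0) = 0)
    (hmom0 : Integrable (fun u => min u (u ^ 2)) m0) (M : ℝ) :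
    ∃ B, ∀ x ∈ Ici (0 : ℝ), ‖x‖ ≤ M → |phi0 a0 c0 m0 x| ≤ B := by
  refine ⟨|a0| * M + |c0| * M ^ 2 + (M + M ^ 2) * ∫ u, min u (u ^ 2) ∂m0,
    fun x (hx : 0 ≤ x) hxM => ?_⟩
  rw [Real.norm_of_nonneg hx] at hxM
  have hI : 0 ≤ ∫ u, min u (u ^ 2) ∂m0 :=
    integral_nonneg_of_ae <| (ae_nonneg_of_Iic_null hsupp0).mono fun u hu =>
      le_min hu (sq_nonneg _)
  have hint : |∫ u, (exp (-(x * u)) - 1 + x * u) ∂m0| ≤ (M + M ^ 2) * ∫ u, min u (u ^ 2) ∂m0 := by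
    refine (norm_integral_le_of_norm_le (hmom0.const_mul _)
      (ae_norm_exp_neg_mul_sub_one_add_le hsupp0 hx)).trans ?_
    rw [integral_const_mul]
    exact mul_le_mul_of_nonneg_right (by nlinarith) hI
  have hsq : x ^ 2 ≤ M ^ 2 := pow_le_pow_left₀ hx hxM 2
  unfold phi0
  calc _ ≤ |a0 * x + c0 * x ^ 2| + |∫ u, (exp (-(x * u)) - 1 + x * u) ∂m0| := abs_add_le _ _
    _ ≤ |a0| * x + |c0| * x ^ 2 + |∫ u, (exp (-(x * u)) - 1 + x * u) ∂m0| := by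
        gcongr
        refine (abs_add_le _ _).trans_eq ?_
        rw [abs_mul, abs_mul, abs_of_nonneg hx, abs_of_nonneg (sq_nonneg x)]
    _ ≤ _ := by
        nlinarith [mul_le_mul_of_nonneg_left hxM (abs_nonneg a0),
          mul_le_mul_of_nonneg_left hsq (abs_nonneg c0)]

lemma phi0_add_mul_sub_le (a0 : ℝ) {c0 : ℝ} (hc0 : 0 ≤ c0) (hsupp0 : m0 (Iic 0) = 0)
    (hmom0 : Integrable (fun u => min u (u ^ 2)) m0) {v x : ℝ} (hv : 0 ≤ v) (hvx : v ≤ x) :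
    phi0 a0 c0 m0 v + a0 * (x - v) ≤ phi0 a0 c0 m0 x := by
  have hint : ∫ u, (exp (-(v * u)) - 1 + v * u) ∂m0 ≤ ∫ u, (exp (-(x * u)) - 1 + x * u) ∂m0 :=
    integral_mono_of_nonneg (ae_of_all _ fun u => exp_neg_sub_one_add_nonneg _)
      (integrable_exp_neg_mul_sub_one_add hsupp0 hmom0 (hv.trans hvx)) <|
      (ae_nonneg_of_Iic_null hsupp0).mono fun u hu =>
        exp_neg_sub_one_add_le_of_le (mul_nonneg hv hu) (mul_le_mul_of_nonneg_right hvx hu)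
  have hsq : c0 * v ^ 2 ≤ c0 * x ^ 2 := mul_le_mul_of_nonneg_left (pow_le_pow_left₀ hv hvx 2) hc0
  unfold phi0
  linarith

lemma phiStar1_add_mul_sub_le_phi1 (b : Matrix (Fin 2) (Fin 2) ℝ) (c : ℝ)
    (hsupp : m quadrantᶜ = 0) (hmom : Integrable (fun z => min z.1 (z.1 ^ 2) + z.2) m)
    {l : ℝ × ℝ} (hl : l ∈ quadrant) :
    phiStar1 b c m l.1 + b 0 1 * (l.2 - l.1) ≤ phi1 b c m l := by
  have hint : ∫ z, (exp (-(l.1 * z.1)) - 1 + l.1 * z.1) ∂m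
      ≤ ∫ z, (exp (-(l.1 * z.1 + l.2 * z.2)) - 1 + (l.1 * z.1 + l.2 * z.2)) ∂m :=
    integral_mono_of_nonneg (ae_of_all _ fun z => exp_neg_sub_one_add_nonneg _)
      (integrable_exp_neg_inner_sub_one_add hsupp hmom hl) <|
      (ae_mem_quadrant hsupp).mono fun z hz =>
        exp_neg_sub_one_add_le_of_le (mul_nonneg hl.1 hz.1)
          (le_add_of_nonneg_right (mul_nonneg hl.2 hz.2))
  unfold phi1 phiStar1
  linarith

end LevyIntegrals

section Swap

variable (b : Matrix (Fin 2) (Fin 2) ℝ) (c : ℝ) (m : Measure (ℝ × ℝ))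

lemma integral_map_swap (f : ℝ × ℝ → ℝ) : ∫ z, f z ∂(m.map Prod.swap) = ∫ z, f z.swap ∂m :=
  integral_map_equiv MeasurableEquiv.prodComm f

lemma lintegral_map_swap (f : ℝ × ℝ → ENNReal) :
    ∫⁻ z, f z ∂(m.map Prod.swap) = ∫⁻ z, f z.swap ∂m :=
  lintegral_map_equiv f MeasurableEquiv.prodComm

lemma phi2_eq_phi1_swap (l : ℝ × ℝ) :
    phi2 b c m l =
      phi1 (b.submatrix (Equiv.swap 0 1) (Equiv.swap 0 1)) c (m.map Prod.swap) l.swap := by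
  simp only [phi1, phi2, integral_map_swap, Matrix.submatrix_apply, Equiv.swap_apply_left,
    Equiv.swap_apply_right, Prod.fst_swap, Prod.snd_swap]
  ring_nf

lemma phiStar2_eq_phiStar1_swap :
    phiStar2 b c m =
      phiStar1 (b.submatrix (Equiv.swap 0 1) (Equiv.swap 0 1)) c (m.map Prod.swap) := by
  ext x
  simp only [phiStar1, phiStar2, integral_map_swap, Matrix.submatrix_apply, Equiv.swap_apply_left,
    Equiv.swap_apply_right, Prod.fst_swap]
  ring_nf

variable {m}

lemma map_swap_quadrant_compl (hsupp : m quadrantᶜ = 0) : m.map Prod.swap quadrantᶜ = 0 := by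
  have hpre : Prod.swap ⁻¹' quadrantᶜ = quadrantᶜ := by
    ext z; simp [quadrant, and_comm]
  rw [← hpre] at hsupp
  exact (MeasurableEquiv.prodComm.map_apply _).trans hsupp

end Swap

lemma intervalIntegrable_exp_mul_comp_smul {E : Type*} [NormedAddCommGroup E] [NormedSpace ℝ E]
    [MeasurableSpace E] [BorelSpace E] [SecondCountableTopology E]
    {Φ : E → ℝ} {S : Set E} (hΦ : Measurable Φ) (hΦS : ∀ M, ∃ B, ∀ l ∈ S, ‖l‖ ≤ M → |Φ l| ≤ B)
    {a t C : ℝ} (hat : a ≤ t) {ξ : ℝ → ℝ} (hξ : Measurable ξ) (hξC : ∀ s ∈ Icc a t, |ξ s| ≤ C)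
    {v : ℝ → E} (hv : ContinuousOn v (Icc a t)) (hvS : ∀ s ∈ Icc a t, exp (-ξ s) • v s ∈ S) :
    IntervalIntegrable (fun s => exp (ξ s) * Φ (exp (-ξ s) • v s)) volume a t := by
  obtain ⟨R, hR⟩ := isCompact_Icc.exists_bound_of_continuousOn hv
  obtain ⟨B, hB⟩ := hΦS (exp C * R)
  have hexp : ∀ s ∈ Icc a t, exp (ξ s) ≤ exp C ∧ exp (-ξ s) ≤ exp C := fun s hs =>
    ⟨exp_le_exp.2 (abs_le.1 (hξC s hs)).2, exp_le_exp.2 (by linarith [(abs_le.1 (hξC s hs)).1])⟩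
  have hmeas : AEStronglyMeasurable (fun s => exp (ξ s) * Φ (exp (-ξ s) • v s))
      (volume.restrict (Icc a t)) :=
    ((by fun_prop : Measurable fun s => exp (ξ s)).aemeasurable.mul
      (hΦ.comp_aemeasurable (((by fun_prop : Measurable fun s => exp (-ξ s)).aemeasurable).smul
        (hv.aemeasurable measurableSet_Icc)))).aestronglyMeasurable
  refine (IntegrableOn.intervalIntegrable ?_)
  rw [uIcc_of_le hat]
  refine (integrable_const (exp C * B)).mono' hmeas ((ae_restrict_iff' measurableSet_Icc).2 ?_)
  refine ae_of_all _ fun s hs => ?_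
  have hΦs : |Φ (exp (-ξ s) • v s)| ≤ B := hB _ (hvS s hs) <| by
    rw [norm_smul, Real.norm_of_nonneg (exp_pos _).le]
    exact mul_le_mul (hexp s hs).2 (hR s hs) (norm_nonneg _) (exp_pos _).le
  rw [Real.norm_eq_abs, abs_mul, abs_of_pos (exp_pos _)]
  exact mul_le_mul (hexp s hs).1 hΦs (abs_nonneg _) (exp_pos _).le

lemma le_integral_of_forall_nonneg_imp_le {d G K : ℝ → ℝ} {a t : ℝ}
    (hd : ContinuousOn d (Icc a t)) (hdt : d t ≤ 0)
    (hG : IntervalIntegrable G volume a t) (hK : IntervalIntegrable K volume a t)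
    (hK0 : ∀ s ∈ Icc a t, 0 ≤ K s) (heq : ∀ r ∈ Icc a t, d r = d t + ∫ s in r..t, G s)
    (hGK : ∀ s ∈ Icc a t, 0 ≤ d s → G s ≤ K s) :
    ∀ r ∈ Icc a t, d r ≤ ∫ s in r..t, K s := by
  intro r hr
  have hsub : ∀ {p q}, p ∈ Icc a t → q ∈ Icc a t → uIcc p q ⊆ uIcc a t := fun hp hq =>
    uIcc_subset_uIcc (Icc_subset_uIcc hp) (Icc_subset_uIcc hq)
  have htI : t ∈ Icc a t := ⟨hr.1.trans hr.2, le_rfl⟩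
  obtain ⟨ρ, ⟨⟨hrρ, hρt⟩, hdρ⟩, hleast⟩ : ∃ ρ, IsLeast (Icc r t ∩ d ⁻¹' Iic 0) ρ := by
    refine (isCompact_Icc.of_isClosed_subset ?_ inter_subset_left).exists_isLeast
      ⟨t, ⟨hr.2, le_rfl⟩, hdt⟩
    exact (hd.mono (Icc_subset_Icc_left hr.1)).preimage_isClosed_of_isClosed isClosed_Icc
      isClosed_Iic
  have hρI : ρ ∈ Icc a t := ⟨hr.1.trans hrρ, hρt⟩
  have hsplit : d r = d ρ + ∫ s in r..ρ, G s := by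
    rw [heq r hr, heq ρ hρI, ← intervalIntegral.integral_add_adjacent_intervals
      (hG.mono_set (hsub hr hρI)) (hG.mono_set (hsub hρI htI))]
    ring
  have hGKρ : ∫ s in r..ρ, G s ≤ ∫ s in r..ρ, K s := by
    refine intervalIntegral.integral_mono_on_of_le_Ioo hrρ (hG.mono_set (hsub hr hρI))
      (hK.mono_set (hsub hr hρI)) fun s hs => hGK s ⟨hr.1.trans hs.1.le, hs.2.le.trans hρt⟩ ?_
    by_contra hneg
    exact absurd (hleast ⟨⟨hs.1.le, hs.2.le.trans hρt⟩, (not_le.1 hneg).le⟩) (not_le.2 hs.2)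
  have hKρt : ∫ s in r..ρ, K s ≤ ∫ s in r..t, K s :=
    intervalIntegral.integral_mono_interval le_rfl hrρ hρt
      ((ae_restrict_iff' measurableSet_Ioc).2 (ae_of_all _ fun s hs =>
        hK0 s ⟨hr.1.trans hs.1.le, hs.2⟩)) (hK.mono_set (hsub hr htI))
  linarith [show d ρ ≤ 0 from hdρ]

lemma le_zero_of_le_integral_const_mul {g : ℝ → ℝ} {a t C : ℝ} (hC : 0 ≤ C)
    (hg : ContinuousOn g (Icc a t)) (hle : ∀ r ∈ Icc a t, g r ≤ ∫ s in r..t, C * g s) :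
    ∀ r ∈ Icc a t, g r ≤ 0 := by
  obtain ⟨M, hM⟩ := isCompact_Icc.exists_bound_of_continuousOn hg
  have hiter : ∀ n : ℕ, ∀ r ∈ Icc a t, g r ≤ M * ((C * (t - r)) ^ n / n.factorial) := by
    intro n
    induction n with
    | zero => exact fun r hr => by simpa using (le_abs_self _).trans (hM r hr)
    | succ n ih =>
      intro r hr
      have hpoly : Continuous fun s => C * (M * ((C * (t - s)) ^ n / n.factorial)) := by
        fun_prop
      have hsub : uIcc r t ⊆ Icc a t := by
        rw [uIcc_of_le hr.2]; exact Icc_subset_Icc_left hr.1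
      calc g r ≤ ∫ s in r..t, C * g s := hle r hr
        _ ≤ ∫ s in r..t, C * (M * ((C * (t - s)) ^ n / n.factorial)) :=
          intervalIntegral.integral_mono_on hr.2
            ((continuousOn_const.mul hg).mono hsub).intervalIntegrable
            (hpoly.intervalIntegrable r t)
            fun s hs => mul_le_mul_of_nonneg_left (ih s ⟨hr.1.trans hs.1, hs.2⟩) hC
        _ = M * ((C * (t - r)) ^ (n + 1) / (n + 1).factorial) := by
          simp only [mul_pow]
          rw [intervalIntegral.integral_const_mul, intervalIntegral.integral_const_mul,
            intervalIntegral.integral_div, intervalIntegral.integral_const_mul,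
            intervalIntegral.integral_comp_sub_left (fun s => s ^ n)]
          simp only [sub_self, integral_pow, Nat.factorial_succ]
          push_cast
          field_simp
          ring
  intro r hr
  have hlim : Filter.Tendsto (fun n : ℕ => M * ((C * (t - r)) ^ n / n.factorial))
      Filter.atTop (nhds 0) := by
    simpa using (FloorSemiring.tendsto_pow_div_factorial_atTop (C * (t - r))).const_mul M
  exact ge_of_tendsto' hlim fun n => hiter n r hr

lemma phi0_sub_phi1_le {b : Matrix (Fin 2) (Fin 2) ℝ} {c : ℝ} {m : Measure (ℝ × ℝ)}
    (hsupp : m quadrantᶜ = 0) (hmom : Integrable (fun z => min z.1 (z.1 ^ 2) + z.2) m)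
    {a0 c0 : ℝ} (hc0 : 0 ≤ c0) {m0 : Measure ℝ} (hsupp0 : m0 (Iic 0) = 0)
    (hmom0 : Integrable (fun u => min u (u ^ 2)) m0)
    (hdom : ∀ x : ℝ, 0 ≤ x → phi0 a0 c0 m0 x ≤ phiStar1 b c m x)
    {v : ℝ} {l : ℝ × ℝ} (hl : l ∈ quadrant) (hv : 0 ≤ v) (hvl : v ≤ l.1) :
    phi0 a0 c0 m0 v - phi1 b c m l ≤ a0 * (v - l.1) + b 0 1 * (l.1 - l.2) := by
  linarith [phi0_add_mul_sub_le a0 hc0 hsupp0 hmom0 hv hvl, hdom l.1 hl.1,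
    phiStar1_add_mul_sub_le_phi1 b c hsupp hmom hl]

lemma exp_mul_phi0_sub_exp_mul_phi1_le {b : Matrix (Fin 2) (Fin 2) ℝ} {c : ℝ}
    {m : Measure (ℝ × ℝ)} (hsupp : m quadrantᶜ = 0)
    (hmom : Integrable (fun z => min z.1 (z.1 ^ 2) + z.2) m)
    {a0 c0 : ℝ} (hc0 : 0 ≤ c0) {m0 : Measure ℝ} (hsupp0 : m0 (Iic 0) = 0)
    (hmom0 : Integrable (fun u => min u (u ^ 2)) m0)
    (hdom : ∀ x : ℝ, 0 ≤ x → phi0 a0 c0 m0 x ≤ phiStar1 b c m x)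
    (x : ℝ) {v : ℝ} {p : ℝ × ℝ} (hp : p ∈ quadrant) (hv : 0 ≤ v) (hvp : v ≤ p.1) :
    exp x * phi0 a0 c0 m0 (exp (-x) * v) - exp x * phi1 b c m (exp (-x) • p)
      ≤ a0 * (v - p.1) + b 0 1 * (p.1 - p.2) := by
  have h := mul_le_mul_of_nonneg_left (phi0_sub_phi1_le hsupp hmom hc0 hsupp0 hmom0 hdom
    (smul_mem_quadrant (exp_pos (-x)).le hp) (mul_nonneg (exp_pos (-x)).le hv)
    (mul_le_mul_of_nonneg_left hvp (exp_pos (-x)).le)) (exp_pos x).le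
  have hexp : exp x * exp (-x) = 1 := by rw [← exp_add, add_neg_cancel, exp_zero]
  simp only [Prod.smul_fst, Prod.smul_snd, smul_eq_mul] at h
  linear_combination h + (a0 * (v - p.1) + b 0 1 * (p.1 - p.2)) * hexp

def excess (u : ℝ → ℝ × ℝ) (w : ℝ → ℝ) (s : ℝ) : ℝ :=
  max (max ((u s).1 - w s) ((u s).2 - w s)) 0

lemma excess_nonneg (u : ℝ → ℝ × ℝ) (w : ℝ → ℝ) (s : ℝ) : 0 ≤ excess u w s :=
  le_max_right _ _

lemma fst_sub_le_excess (u : ℝ → ℝ × ℝ) (w : ℝ → ℝ) (s : ℝ) : (u s).1 - w s ≤ excess u w s :=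
  (le_max_left _ _).trans (le_max_left _ _)

lemma snd_sub_le_excess (u : ℝ → ℝ × ℝ) (w : ℝ → ℝ) (s : ℝ) : (u s).2 - w s ≤ excess u w s :=
  (le_max_right _ _).trans (le_max_left _ _)

lemma excess_swap (u : ℝ → ℝ × ℝ) (w : ℝ → ℝ) : excess (Prod.swap ∘ u) w = excess u w := by
  ext s
  simp only [excess, Function.comp_apply, Prod.fst_swap, Prod.snd_swap, max_comm ((u s).2 - w s)]

lemma continuousOn_excess {u : ℝ → ℝ × ℝ} {w : ℝ → ℝ} {S : Set ℝ} (hu : ContinuousOn u S)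
    (hw : ContinuousOn w S) : ContinuousOn (excess u w) S := by
  unfold excess
  fun_prop

lemma fst_sub_le_integral_excess (b : Matrix (Fin 2) (Fin 2) ℝ) (c : ℝ) (m : Measure (ℝ × ℝ))
    [SFinite m] (hsupp : m quadrantᶜ = 0)
    (hmom : Integrable (fun z => min z.1 (z.1 ^ 2) + z.2) m)
    (hadm : b 0 1 + ∫ z, z.2 ∂m ≤ 0)
    (a0 c0 : ℝ) (hc0 : 0 ≤ c0) (m0 : Measure ℝ) [SFinite m0] (hsupp0 : m0 (Iic 0) = 0)
    (hmom0 : Integrable (fun u => min u (u ^ 2)) m0)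
    (hdom : ∀ x : ℝ, 0 ≤ x → phi0 a0 c0 m0 x ≤ phiStar1 b c m x)
    {t r0 : ℝ} (hr0 : r0 ≤ t) {ξ : ℝ → ℝ} (hξ : Measurable ξ) {Cξ : ℝ}
    (hξC : ∀ s ∈ Icc r0 t, |ξ s| ≤ Cξ) {u : ℝ → ℝ × ℝ} {w : ℝ → ℝ}
    (hu : ContinuousOn u (Icc r0 t)) (hw : ContinuousOn w (Icc r0 t))
    (huq : ∀ r ∈ Icc r0 t, u r ∈ quadrant) (hw0 : ∀ r ∈ Icc r0 t, 0 ≤ w r) {l W : ℝ}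
    (hlW : l ≤ W)
    (hueq : ∀ r ∈ Icc r0 t,
      (u r).1 = l - ∫ s in r..t, exp (ξ s) * phi1 b c m (exp (-ξ s) • u s))
    (hweq : ∀ r ∈ Icc r0 t,
      w r = W - ∫ s in r..t, exp (ξ s) * phi0 a0 c0 m0 (exp (-ξ s) * w s))
    {C : ℝ} (hC : |a0| - b 0 1 ≤ C) :
    ∀ r ∈ Icc r0 t, (u r).1 - w r ≤ ∫ s in r..t, C * excess u w s := by
  have hb : b 0 1 ≤ 0 := by
    linarith [integral_nonneg_of_ae ((ae_mem_quadrant hsupp).mono fun z hz => hz.2)]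
  set F : ℝ → ℝ := fun s => exp (ξ s) * phi1 b c m (exp (-ξ s) • u s)
  set F0 : ℝ → ℝ := fun s => exp (ξ s) * phi0 a0 c0 m0 (exp (-ξ s) * w s)
  have hF : IntervalIntegrable F volume r0 t :=
    intervalIntegrable_exp_mul_comp_smul (phi1_measurable b c m)
      (exists_abs_phi1_le b c hsupp hmom) hr0 hξ hξC hu
      fun s hs => smul_mem_quadrant (exp_pos _).le (huq s hs)
  have hF0 : IntervalIntegrable F0 volume r0 t :=
    intervalIntegrable_exp_mul_comp_smul (phi0_measurable a0 c0 m0)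
      (exists_abs_phi0_le a0 c0 hsupp0 hmom0) hr0 hξ hξC hw
      fun s hs => mul_nonneg (exp_pos _).le (hw0 s hs)
  have htI : t ∈ Icc r0 t := ⟨hr0, le_rfl⟩
  have hsub : ∀ r ∈ Icc r0 t, uIcc r t ⊆ uIcc r0 t := fun r hr =>
    uIcc_subset_uIcc (Icc_subset_uIcc hr) (Icc_subset_uIcc htI)
  refine le_integral_of_forall_nonneg_imp_le (G := fun s => F0 s - F s)
    ((continuous_fst.comp_continuousOn hu).sub hw) ?_ (hF0.sub hF)
    ((continuousOn_const.mul (continuousOn_excess hu hw)).intervalIntegrable_of_Icc hr0)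
    (fun s _ => mul_nonneg ((abs_nonneg a0).trans (by linarith)) (excess_nonneg u w s)) ?_ ?_
  · simp only [hueq t htI, hweq t htI, intervalIntegral.integral_same]
    linarith
  · intro r hr
    rw [intervalIntegral.integral_sub (hF0.mono_set (hsub r hr)) (hF.mono_set (hsub r hr)),
      hueq r hr, hweq r hr, hueq t htI, hweq t htI]
    simp only [intervalIntegral.integral_same, F, F0]
    ring
  · intro s hs hd
    have hsc := exp_mul_phi0_sub_exp_mul_phi1_le hsupp hmom hc0 hsupp0 hmom0 hdom (ξ s)
      (huq s hs) (hw0 s hs) (by linarith)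
    have hd1 := fst_sub_le_excess u w s
    have hd2 := snd_sub_le_excess u w s
    have hg := excess_nonneg u w s
    simp only [F, F0]
    linarith [mul_le_mul_of_nonneg_right (neg_le_abs a0) hd,
      mul_le_mul_of_nonneg_left hd1 (abs_nonneg a0),
      mul_le_mul_of_nonneg_left (by linarith : (u s).2 - (u s).1 ≤ excess u w s)
        (neg_nonneg.2 hb), mul_le_mul_of_nonneg_right hC hg]

theorem stmt14_general (b : Matrix (Fin 2) (Fin 2) ℝ) (c1 c2 : ℝ)
    (m1 m2 : Measure (ℝ × ℝ)) [SigmaFinite m1] [SigmaFinite m2]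
    (hsupp1 : m1 quadrantᶜ = 0)
    (hsupp2 : m2 quadrantᶜ = 0)
    (hmom1 : ∫⁻ z, ENNReal.ofReal (min z.1 (z.1 ^ 2) + z.2) ∂m1 < ⊤)
    (hmom2 : ∫⁻ z, ENNReal.ofReal (min z.2 (z.2 ^ 2) + z.1) ∂m2 < ⊤)
    (hadm1 : b 0 1 + ∫ z, z.2 ∂m1 ≤ 0)
    (hadm2 : b 1 0 + ∫ z, z.1 ∂m2 ≤ 0)
    (a0 c0 : ℝ) (hc0 : 0 ≤ c0)
    (m0 : Measure ℝ) [SigmaFinite m0]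
    (hsupp0 : m0 (Set.Iic 0) = 0)
    (hmom0 : ∫⁻ u, ENNReal.ofReal (min u (u ^ 2)) ∂m0 < ⊤)
    (hdom1 : ∀ x : ℝ, 0 ≤ x → phi0 a0 c0 m0 x ≤ phiStar1 b c1 m1 x)
    (hdom2 : ∀ x : ℝ, 0 ≤ x → phi0 a0 c0 m0 x ≤ phiStar2 b c2 m2 x)
    (t r0 : ℝ) (hr0 : r0 ≤ t)
    (ξ : ℝ → ℝ) (hξmeas : Measurable ξ)
    (hξbdd : ∃ C : ℝ, ∀ s ∈ Set.Icc r0 t, |ξ s| ≤ C)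
    (lam : ℝ × ℝ)
    (u : ℝ → ℝ × ℝ) (w : ℝ → ℝ)
    (hucont : ContinuousOn u (Set.Icc r0 t))
    (hwcont : ContinuousOn w (Set.Icc r0 t))
    (huquad : ∀ r ∈ Set.Icc r0 t, u r ∈ quadrant)
    (hwpos : ∀ r ∈ Set.Icc r0 t, 0 ≤ w r)
    (hueq1 : ∀ r ∈ Set.Icc r0 t,
      (u r).1 = lam.1 - ∫ s in r..t,
        Real.exp (ξ s) * phi1 b c1 m1 (Real.exp (-ξ s) • u s))
    (hueq2 : ∀ r ∈ Set.Icc r0 t,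
      (u r).2 = lam.2 - ∫ s in r..t,
        Real.exp (ξ s) * phi2 b c2 m2 (Real.exp (-ξ s) • u s))
    (hweq : ∀ r ∈ Set.Icc r0 t,
      w r = max lam.1 lam.2 - ∫ s in r..t,
        Real.exp (ξ s) * phi0 a0 c0 m0 (Real.exp (-ξ s) * w s)) :
    ∀ r ∈ Set.Icc r0 t, (u r).1 ≤ w r ∧ (u r).2 ≤ w r := by
  obtain ⟨Cξ, hξC⟩ := hξbdd
  have hsupp2' := map_swap_quadrant_compl hsupp2
  have hm0 : Integrable (fun u => min u (u ^ 2)) m0 :=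
    integrable_of_lintegral_ofReal_lt_top (by fun_prop)
      ((ae_nonneg_of_Iic_null hsupp0).mono fun u hu => le_min hu (sq_nonneg u)) hmom0
  set C := |a0| + |b 0 1| + |b 1 0|
  have h1 := fst_sub_le_integral_excess b c1 m1 hsupp1 (integrable_moment hsupp1 hmom1) hadm1
    a0 c0 hc0 m0 hsupp0 hm0 hdom1 hr0 hξmeas hξC hucont hwcont huquad hwpos
    (le_max_left _ _) hueq1 hweq (C := C) (by linarith [neg_le_abs (b 0 1), abs_nonneg (b 1 0)])
  -- the second type is the first one after exchanging the coordinates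
  have h2 := fst_sub_le_integral_excess (b.submatrix (Equiv.swap 0 1) (Equiv.swap 0 1)) c2
    (m2.map Prod.swap) hsupp2'
    (integrable_moment hsupp2' (by rwa [lintegral_map_swap])) (by simpa [integral_map_swap])
    a0 c0 hc0 m0 hsupp0 hm0 (by rwa [← phiStar2_eq_phiStar1_swap]) hr0 hξmeas hξC
    (continuous_swap.comp_continuousOn hucont) hwcont (fun r hr => (huquad r hr).symm) hwpos
    (le_max_right _ _) (fun r hr => by simpa [phi2_eq_phi1_swap, Prod.smul_swap] using hueq2 r hr)
    hweq (C := C) (by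
      simp only [Matrix.submatrix_apply, Equiv.swap_apply_left, Equiv.swap_apply_right]
      linarith [neg_le_abs (b 1 0), abs_nonneg (b 0 1)])
  rw [excess_swap] at h2
  have hexcess := le_zero_of_le_integral_const_mul (by positivity)
    (continuousOn_excess hucont hwcont) fun r hr => max_le (max_le (h1 r hr) (h2 r hr))
      (intervalIntegral.integral_nonneg hr.2 fun s _ => mul_nonneg (by positivity) (excess_nonneg u w s))
  exact fun r hr => ⟨by linarith [fst_sub_le_excess u w r, hexcess r hr],
    by linarith [snd_sub_le_excess u w r, hexcess r hr]⟩

/-- If the scalar branching mechanism `φ⁰` is dominated by both local projections `φ*₁`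
and `φ*₂` of the two-type branching mechanism `φ`, then any continuous quadrant-valued
solution `u` of the two-type backward equation with terminal value `λ` is dominated,
componentwise, by the continuous nonnegative solution `w` of the scalar backward equation
with terminal value `max(λ1, λ2)`. -/
theorem stmt14 (b : Matrix (Fin 2) (Fin 2) ℝ) (c1 c2 : ℝ) (hc1 : 0 ≤ c1) (hc2 : 0 ≤ c2)
    (m1 m2 : Measure (ℝ × ℝ)) [SigmaFinite m1] [SigmaFinite m2]
    (hsupp1 : m1 quadrantᶜ = 0) (hzero1 : m1 {0} = 0)
    (hsupp2 : m2 quadrantᶜ = 0) (hzero2 : m2 {0} = 0)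
    (hmom1 : ∫⁻ z, ENNReal.ofReal (min z.1 (z.1 ^ 2) + z.2) ∂m1 < ⊤)
    (hmom2 : ∫⁻ z, ENNReal.ofReal (min z.2 (z.2 ^ 2) + z.1) ∂m2 < ⊤)
    (hadm1 : b 0 1 + ∫ z, z.2 ∂m1 ≤ 0)
    (hadm2 : b 1 0 + ∫ z, z.1 ∂m2 ≤ 0)
    (a0 c0 : ℝ) (hc0 : 0 ≤ c0)
    (m0 : Measure ℝ) [SigmaFinite m0]
    (hsupp0 : m0 (Set.Iic 0) = 0)
    (hmom0 : ∫⁻ u, ENNReal.ofReal (min u (u ^ 2)) ∂m0 < ⊤)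
    (hdom1 : ∀ x : ℝ, 0 ≤ x → phi0 a0 c0 m0 x ≤ phiStar1 b c1 m1 x)
    (hdom2 : ∀ x : ℝ, 0 ≤ x → phi0 a0 c0 m0 x ≤ phiStar2 b c2 m2 x)
    (t r0 : ℝ) (hr0 : r0 ≤ t)
    (ξ : ℝ → ℝ) (hξmeas : Measurable ξ)
    (hξbdd : ∃ C : ℝ, ∀ s ∈ Set.Icc r0 t, |ξ s| ≤ C)
    (lam : ℝ × ℝ) (hlam : lam ∈ quadrant)
    (u : ℝ → ℝ × ℝ) (w : ℝ → ℝ)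
    (hucont : ContinuousOn u (Set.Icc r0 t))
    (hwcont : ContinuousOn w (Set.Icc r0 t))
    (huquad : ∀ r ∈ Set.Icc r0 t, u r ∈ quadrant)
    (hwpos : ∀ r ∈ Set.Icc r0 t, 0 ≤ w r)
    (hueq1 : ∀ r ∈ Set.Icc r0 t,
      (u r).1 = lam.1 - ∫ s in r..t,
        Real.exp (ξ s) * phi1 b c1 m1 (Real.exp (-ξ s) • u s))
    (hueq2 : ∀ r ∈ Set.Icc r0 t,
      (u r).2 = lam.2 - ∫ s in r..t,
        Real.exp (ξ s) * phi2 b c2 m2 (Real.exp (-ξ s) • u s))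
    (hweq : ∀ r ∈ Set.Icc r0 t,
      w r = max lam.1 lam.2 - ∫ s in r..t,
        Real.exp (ξ s) * phi0 a0 c0 m0 (Real.exp (-ξ s) * w s)) :
    ∀ r ∈ Set.Icc r0 t, (u r).1 ≤ w r ∧ (u r).2 ≤ w r :=
  stmt14_general b c1 c2 m1 m2 hsupp1 hsupp2 hmom1 hmom2 hadm1 hadm2 a0 c0 hc0 m0 hsupp0 hmom0 hdom1
    hdom2 t r0 hr0 ξ hξmeas hξbdd lam u w hucont hwcont huquad hwpos hueq1 hueq2 hweq
end
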